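/- Let ε > 0, H > 0, θ ∈ ℝ, and define maps on ℂ by 𝓕u = e^{(1+i/ε)H}·u and 𝓒u = e^{H}·e^{i(H/ε+θ)}·u. Define the parareal iterates with u₀ = 1 by u⁰ₙ = 𝓒ⁿ(1), uᵏ₀ = 1, and uᵏₙ = 𝓒(uᵏₙ₋₁) + 𝓕(uᵏ⁻¹ₙ₋₁) − 𝓒(uᵏ⁻¹ₙ₋₁). Then the second-iteration value at n = 3 satisfies the exact identity u²₃ = e^{3(1+i/ε)H}·(1 − (1 − e^{iθ})³), and consequently |u²₃ − u(3H)| ≤ |θ|³·e^{3H}, where u(3H) = e^{3(1+i/ε)H} is the exact solution of u̇ = (1 + i/ε)u, u(0) = 1, at time 3H. Thus each naive parareal iteration improves the phase error by one power of θ, so the iterations converge only when the coarse phase error θ is small. -/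

import Mathlib

open Complex

/-!
For linear propagators `𝓕 z = F z` and `𝓒 z = G z` the parareal error `eᵏₙ = uᵏₙ - Fⁿ` obeys
`eᵏ⁺¹ₙ₊₁ = G eᵏ⁺¹ₙ + (F - G) eᵏₙ` with `eᵏ₀ = 0`. Hence `eᵏₙ = 0` for `n ≤ k`, and on the first
inexact diagonal `eᵏₖ₊₁ = -(F - G)ᵏ⁺¹`. For the spiral `G = F e^{iθ}` and `|F| = e^H`, so
`|e²₃| = e^{3H} |1 - e^{iθ}|³ ≤ e^{3H} |θ|³`.
-/

structure IsPararealIteration {R : Type*} [CommRing R] (F G : R) (u : ℕ → ℕ → R) : Prop where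
  init : ∀ n, u 0 n = G ^ n
  zero : ∀ k, u k 0 = 1
  succ : ∀ k n, u (k + 1) (n + 1) = G * u (k + 1) n + F * u k n - G * u k n

namespace IsPararealIteration

variable {R : Type*} [CommRing R] {F G : R} {u : ℕ → ℕ → R}

theorem sub_pow_succ (hu : IsPararealIteration F G u) (k n : ℕ) :
    u (k + 1) (n + 1) - F ^ (n + 1) = G * (u (k + 1) n - F ^ n) + (F - G) * (u k n - F ^ n) := by
  rw [hu.succ]; ring

theorem eq_pow_of_le (hu : IsPararealIteration F G u) {k n : ℕ} (h : n ≤ k) : u k n = F ^ n := by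
  induction n generalizing k with
  | zero => rw [hu.zero, pow_zero]
  | succ n ih =>
    obtain ⟨k, rfl⟩ : ∃ k', k = k' + 1 := Nat.exists_eq_add_one.mpr (by omega)
    linear_combination hu.sub_pow_succ k n + G * ih (by omega : n ≤ k + 1)
      + (F - G) * ih (by omega : n ≤ k)

theorem eq_pow_sub_sub_pow (hu : IsPararealIteration F G u) (k : ℕ) :
    u k (k + 1) = F ^ (k + 1) - (F - G) ^ (k + 1) := by
  induction k with
  | zero => rw [hu.init]; ring
  | succ k ih =>
    linear_combination hu.sub_pow_succ k (k + 1) + G * hu.eq_pow_of_le (le_refl (k + 1))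
      + (F - G) * ih

end IsPararealIteration

theorem norm_exp_one_add_I_div_mul (ε H : ℝ) : ‖exp ((1 + I / ε) * H)‖ = Real.exp H := by
  rw [norm_exp]
  congr 1
  simp

theorem parareal_spiral_second_iteration_general
    (ε H θ : ℝ)
    (𝓕 𝓒 : ℂ → ℂ)
    (h𝓕 : ∀ z : ℂ, 𝓕 z = Complex.exp ((1 + Complex.I / (ε : ℂ)) * (H : ℂ)) * z)
    (h𝓒 : ∀ z : ℂ, 𝓒 z = (Real.exp H : ℂ)
      * Complex.exp (Complex.I * ((H : ℂ) / (ε : ℂ) + (θ : ℂ))) * z)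
    (u : ℕ → ℕ → ℂ)
    (hinit : ∀ n : ℕ, u 0 n = 𝓒^[n] 1)
    (hzero : ∀ k : ℕ, u k 0 = 1)
    (hrec : ∀ k n : ℕ, u (k + 1) (n + 1)
      = 𝓒 (u (k + 1) n) + 𝓕 (u k n) - 𝓒 (u k n)) :
    u 2 3 = Complex.exp (3 * (1 + Complex.I / (ε : ℂ)) * (H : ℂ))
        * (1 - (1 - Complex.exp (Complex.I * (θ : ℂ))) ^ 3)
      ∧ ‖u 2 3 - Complex.exp (3 * (1 + Complex.I / (ε : ℂ)) * (H : ℂ))‖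
        ≤ |θ| ^ 3 * Real.exp (3 * H) := by
  set F := exp ((1 + I / ε) * H)
  set q := exp (I * θ)
  have hC : 𝓒 = (F * q * ·) := by
    ext z
    rw [h𝓒, ofReal_exp, ← exp_add, ← exp_add]
    ring_nf
  have hu : IsPararealIteration F (F * q) u :=
    ⟨fun n ↦ by rw [hinit, hC, mul_left_iterate_apply, mul_one], hzero,
      fun k n ↦ by rw [hrec, hC, h𝓕]⟩
  have hF3 : exp (3 * (1 + I / ε) * H) = F ^ 3 := by
    rw [← exp_nat_mul]; ring_nf
  have h23 : u 2 3 = F ^ 3 - (F * (1 - q)) ^ 3 := by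
    rw [hu.eq_pow_sub_sub_pow 2]; ring
  refine ⟨by rw [h23, hF3]; ring, ?_⟩
  calc ‖u 2 3 - exp (3 * (1 + I / ε) * H)‖ = ‖F‖ ^ 3 * ‖q - 1‖ ^ 3 := by
        rw [h23, hF3, show F ^ 3 - (F * (1 - q)) ^ 3 - F ^ 3 = (F * (q - 1)) ^ 3 by ring,
          norm_pow, norm_mul, mul_pow]
    _ ≤ Real.exp H ^ 3 * |θ| ^ 3 := by
        rw [norm_exp_one_add_I_div_mul]
        gcongr
        exact Real.norm_exp_I_mul_ofReal_sub_one_le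
    _ = |θ| ^ 3 * Real.exp (3 * H) := by
        rw [← Real.exp_nat_mul]; push_cast; ring

/-- For the expanding spiral `u̇ = (1 + i/ε) u`, `u(0) = 1`, with exact fine propagator
`𝓕 u = e^{(1+i/ε)H} u` and a coarse propagator `𝓒 u = e^H e^{i(H/ε+θ)} u` that is exact
in the amplitude but makes a phase error `θ` per step, the second parareal iterate at
`n = 3` satisfies `u²₃ = e^{3(1+i/ε)H} (1 - (1 - e^{iθ})³)`, hence
`|u²₃ - u(3H)| ≤ |θ|³ e^{3H}`. -/
theorem parareal_spiral_second_iteration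
    (ε H θ : ℝ) (hε : 0 < ε) (hH : 0 < H)
    (𝓕 𝓒 : ℂ → ℂ)
    (h𝓕 : ∀ z : ℂ, 𝓕 z = Complex.exp ((1 + Complex.I / (ε : ℂ)) * (H : ℂ)) * z)
    (h𝓒 : ∀ z : ℂ, 𝓒 z = (Real.exp H : ℂ)
      * Complex.exp (Complex.I * ((H : ℂ) / (ε : ℂ) + (θ : ℂ))) * z)
    (u : ℕ → ℕ → ℂ)
    (hinit : ∀ n : ℕ, u 0 n = 𝓒^[n] 1)
    (hzero : ∀ k : ℕ, u k 0 = 1)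
    (hrec : ∀ k n : ℕ, u (k + 1) (n + 1)
      = 𝓒 (u (k + 1) n) + 𝓕 (u k n) - 𝓒 (u k n)) :
    u 2 3 = Complex.exp (3 * (1 + Complex.I / (ε : ℂ)) * (H : ℂ))
        * (1 - (1 - Complex.exp (Complex.I * (θ : ℂ))) ^ 3)
      ∧ ‖u 2 3 - Complex.exp (3 * (1 + Complex.I / (ε : ℂ)) * (H : ℂ))‖
        ≤ |θ| ^ 3 * Real.exp (3 * H) :=
  parareal_spiral_second_iteration_general ε H θ 𝓕 𝓒 h𝓕 h𝓒 u hinit hzero hrec
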